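/- Let A be a finite abelian group, G a finite group, α : G → Aut(A) an action, and K = A ⋊_α G. Let σ ∈ Â with stabilizer G(σ) = {g ∈ G : g·σ = σ}, set K(σ) = A ⋊_α G(σ) ≤ K, and for a class function f : G(σ) → ℂ define σ⊙f : K(σ) → ℂ by (σ⊙f)(a, s) = σ(a)·f(s). Then σ⊙f is a class function on K(σ), and for all (a, g) ∈ K: (Ind_{K(σ)}^K (σ⊙f))(a, g) = (1/|G(σ)|) · Σ_{s ∈ G, s g s⁻¹ ∈ G(σ)} σ(α_s(a)) · f(s g s⁻¹). (This is the group case of Proposition 4.2.) -/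
import Mathlib


namespace Stmt14

open scoped Classical in
/-- The function induced from a subgroup `H` of a finite group `K`:
`(Ind_H^K f)(k) = (1/|H|) · Σ_{t ∈ K, t k t⁻¹ ∈ H} f (t k t⁻¹)`. -/
noncomputable def ind {K : Type*} [Group K] [Fintype K] (H : Subgroup K) (f : K → ℂ) :
    K → ℂ :=
  fun k => (1 / (Nat.card H : ℂ)) * ∑ t : K, if t * k * t⁻¹ ∈ H then f (t * k * t⁻¹) else 0

instance {A G : Type*} [Group A] [Fintype A] [Group G] [Fintype G] {α : G →* MulAut A} :
    Fintype (A ⋊[α] G) :=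
  Fintype.ofEquiv (A × G)
    { toFun := fun p => ⟨p.1, p.2⟩
      invFun := fun x => (x.left, x.right)
      left_inv := fun _ => rfl
      right_inv := fun _ => rfl }

open scoped Classical in
/-- Proposition 4.2, group case.  Let `σ ∈ Â` with stabilizer `G(σ) = Gσ`, let
`K(σ) = A ⋊[α] G(σ)` (realized as the subgroup `Gσ.comap rightHom` of `K = A ⋊[α] G`),
and let `f` be a class function on `G(σ)`.  Then `σ⊙f : (a, s) ↦ σ(a)·f(s)` is a class
function on `K(σ)`, and for all `(a, g) ∈ K`,
`(Ind_{K(σ)}^K (σ⊙f))(a, g) = (1/|G(σ)|) Σ_{s ∈ G, s g s⁻¹ ∈ G(σ)} σ(α_s(a)) f(s g s⁻¹)`. -/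
theorem ind_sigma_odot {A G : Type*} [CommGroup A] [Fintype A] [Group G] [Fintype G]
    (α : G →* MulAut A) (σ : A →* ℂˣ)
    (Gσ : Subgroup G) (hGσ : ∀ g : G, g ∈ Gσ ↔ ∀ b : A, σ ((α g⁻¹) b) = σ b)
    (f : G → ℂ) (hf : ∀ s t : G, s ∈ Gσ → t ∈ Gσ → f (s * t * s⁻¹) = f t) :
    (∀ x y : A ⋊[α] G, x ∈ Gσ.comap SemidirectProduct.rightHom →
        y ∈ Gσ.comap SemidirectProduct.rightHom →
        ((σ (x * y * x⁻¹).left : ℂˣ) : ℂ) * f (x * y * x⁻¹).right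
          = ((σ y.left : ℂˣ) : ℂ) * f y.right) ∧
    (∀ (a : A) (g : G),
      ind (Gσ.comap (SemidirectProduct.rightHom : A ⋊[α] G →* G))
          (fun x => ((σ x.left : ℂˣ) : ℂ) * f x.right) ⟨a, g⟩
        = (1 / (Nat.card Gσ : ℂ)) *
            ∑ s : G, if s * g * s⁻¹ ∈ Gσ
              then ((σ ((α s) a) : ℂˣ) : ℂ) * f (s * g * s⁻¹) else 0) := by
  -- key: σ invariant under α s for s ∈ Gσ
  have key : ∀ s ∈ Gσ, ∀ b : A, σ (α s b) = σ b := by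
    intro s hs b
    have := (hGσ s⁻¹).1 (inv_mem hs) b
    rwa [inv_inv] at this
  have hleft : ∀ (a b : A) (s g : G),
      (⟨b,s⟩ * ⟨a,g⟩ * (⟨b,s⟩ : A ⋊[α] G)⁻¹).left = b * α s a * α (s*g*s⁻¹) b⁻¹ := by
    intro a b s g; simp [mul_assoc, map_mul]
  have hright : ∀ (a b : A) (s g : G),
      (⟨b,s⟩ * ⟨a,g⟩ * (⟨b,s⟩ : A ⋊[α] G)⁻¹).right = s * g * s⁻¹ := by
    intro a b s g; simp
  have hsig : ∀ (a b : A) (s g : G), s * g * s⁻¹ ∈ Gσ →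
      ((σ (b * α s a * α (s*g*s⁻¹) b⁻¹) : ℂˣ) : ℂ) = ((σ (α s a) : ℂˣ) : ℂ) := by
    intro a b s g h
    rw [map_mul, map_mul, key _ h]
    push_cast
    rw [map_inv]
    push_cast
    field_simp
  constructor
  · rintro ⟨c, s⟩ ⟨d, t⟩ hx hy
    simp only [Subgroup.mem_comap, SemidirectProduct.rightHom_eq_right] at hx hy
    rw [hleft, hright, hsig d c s t (mul_mem (mul_mem hx hy) (inv_mem hx)),
      key s hx, hf s t hx hy]
  · intro a g
    have hsum : ∀ F : (A ⋊[α] G) → ℂ, ∑ t : A ⋊[α] G, F t = ∑ p : A × G, F ⟨p.1, p.2⟩ :=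
      fun F => (Equiv.sum_comp
        ⟨fun p => ⟨p.1, p.2⟩, fun x => (x.left, x.right), fun _ => rfl, fun _ => rfl⟩ F).symm
    have hcard : (Nat.card (Gσ.comap (SemidirectProduct.rightHom : A ⋊[α] G →* G)) : ℂ)
        = (Fintype.card A : ℂ) * (Nat.card Gσ : ℂ) := by
      have e2 : (Gσ.comap (SemidirectProduct.rightHom : A ⋊[α] G →* G)) ≃ A × Gσ :=
        { toFun := fun x => (x.1.left, ⟨x.1.right, x.2⟩)
          invFun := fun p => ⟨⟨p.1, p.2.1⟩, p.2.2⟩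
          left_inv := fun _ => rfl
          right_inv := fun _ => rfl }
      rw [Nat.card_congr e2, Nat.card_prod, Nat.card_eq_fintype_card]
      push_cast; ring
    rw [ind, hcard]
    rw [hsum, Fintype.sum_prod_type_right]
    have hinner : ∀ s : G, (∑ b : A, if (⟨b,s⟩ : A ⋊[α] G) * ⟨a,g⟩ * (⟨b,s⟩ : A ⋊[α] G)⁻¹ ∈
          Gσ.comap (SemidirectProduct.rightHom : A ⋊[α] G →* G)
        then ((σ ((⟨b,s⟩ : A ⋊[α] G) * ⟨a,g⟩ * (⟨b,s⟩ : A ⋊[α] G)⁻¹).left : ℂˣ) : ℂ)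
            * f ((⟨b,s⟩ : A ⋊[α] G) * ⟨a,g⟩ * (⟨b,s⟩ : A ⋊[α] G)⁻¹).right else 0)
        = (Fintype.card A : ℂ) *
          (if s * g * s⁻¹ ∈ Gσ then ((σ ((α s) a) : ℂˣ) : ℂ) * f (s * g * s⁻¹) else 0) := by
      intro s
      rw [Finset.sum_congr rfl (fun b _ => ?_), Finset.sum_const, Finset.card_univ,
        nsmul_eq_mul]
      simp only [Subgroup.mem_comap, SemidirectProduct.rightHom_eq_right, hright, hleft]
      split_ifs with h
      · rw [hsig a b s g h]
      · rfl
    rw [Finset.sum_congr rfl (fun s _ => hinner s), ← Finset.mul_sum]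
    have hA : (Fintype.card A : ℂ) ≠ 0 := by
      exact_mod_cast Fintype.card_ne_zero
    field_simp
 


end Stmt14
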